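/- Let k ≥ 2 be an integer and let S be a set of n points in the real plane ℝ², each colored red or blue, such that no line contains more than k points of S. Let b denote the number of blue points and r the number of red points (so b + r = n). Then the number of monochromatic lines of S is at least (b² − (k−2)·b·r + r² − n) / (k(k−1)). -/

import Mathlib

/-!
Double count the ordered pairs of distinct points of `S` by the unique line through them. On a
line carrying `β` blue and `ρ` red points (`β + ρ ≤ k`) there are `β(β-1) + ρ(ρ-1)` monochromatic
pairs; this is at most `k(k-1)` if the line is monochromatic, and at most `(k-2)βρ` otherwise,
since then `(β-1)(ρ-1)(β+ρ) ≥ 0`. Summing over the lines, the monochromatic pairs add up to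
`b(b-1) + r(r-1)` and the products `βρ` to `br`, so
`b(b-1) + r(r-1) ≤ k(k-1)·#(monochromatic lines) + (k-2)br`. For `k ≤ 1` the right-hand side
of the theorem divides by `0`, so it is `0`.
-/

/-- A line in the plane `ℝ × ℝ` is a one-dimensional affine subspace
(viewed as a set of points). -/
def IsLine (L : Set (ℝ × ℝ)) : Prop :=
  ∃ ℓ : AffineSubspace ℝ (ℝ × ℝ), Module.finrank ℝ ℓ.direction = 1 ∧ L = (ℓ : Set (ℝ × ℝ))

/-- The monochromatic lines of a two-colored point set `S`: lines containing at least
two points of `S`, all points of `S` on the line having the same color. -/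
def monoLines (S : Set (ℝ × ℝ)) (c : (ℝ × ℝ) → Bool) : Set (Set (ℝ × ℝ)) :=
  {L | IsLine L ∧ 2 ≤ (S ∩ L).ncard ∧ ∀ p ∈ S ∩ L, ∀ q ∈ S ∩ L, c p = c q}

open Finset
open scoped Classical

theorem AffineSubspace.affineSpan_pair_eq_of_finrank_direction_eq_one {k V P : Type*}
    [DivisionRing k] [AddCommGroup V] [Module k V] [AddTorsor V P] {ℓ : AffineSubspace k P}
    (hℓ : Module.finrank k ℓ.direction = 1) {p q : P} (hpq : p ≠ q) (hp : p ∈ ℓ) (hq : q ∈ ℓ) :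
    line[k, p, q] = ℓ := by
  have : FiniteDimensional k ℓ.direction := Module.finite_of_finrank_pos (by omega)
  refine eq_of_direction_eq_of_nonempty_of_le ?_ ⟨p, left_mem_affineSpan_pair k p q⟩
    (affineSpan_pair_le_of_mem_of_mem hp hq)
  refine Submodule.eq_of_le_of_finrank_eq
    (direction_le (affineSpan_pair_le_of_mem_of_mem hp hq)) ?_
  rw [hℓ, direction_affineSpan, vectorSpan_pair, finrank_span_singleton (vsub_ne_zero.2 hpq)]

theorem Finset.filter_offDiag {α : Type*} (s : Finset α) (p : α → Prop) [DecidablePred p] :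
    {x ∈ s.offDiag | p x.1 ∧ p x.2} = {a ∈ s | p a}.offDiag := by
  ext x
  simp only [mem_filter, mem_offDiag]
  tauto

theorem Finset.cast_card_offDiag {α R : Type*} [Ring R] (s : Finset α) :
    (#s.offDiag : R) = #s * (#s - 1) := by
  rw [offDiag_card, Nat.cast_sub (Nat.le_mul_self _), mul_sub_one, Nat.cast_mul]

theorem Finset.ncard_setOf_mem_and {α : Type*} (s : Finset α) (P : α → Prop) [DecidablePred P] :
    {a | a ∈ (s : Set α) ∧ P a}.ncard = #{a ∈ s | P a} := by
  rw [← Set.ncard_coe_finset, coe_filter]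
  rfl

theorem Nat.cast_mul_sub_one_le {R : Type*} [Field R] [LinearOrder R] [IsStrictOrderedRing R]
    {m n : ℕ} (h : m ≤ n) : (m * (m - 1) : R) ≤ n * (n - 1) := by
  obtain rfl | hlt := h.eq_or_lt
  · rfl
  · have : (m + 1 : R) ≤ n := by exact_mod_cast hlt
    nlinarith [(Nat.cast_nonneg m : (0 : R) ≤ m)]

theorem mul_sub_one_add_mul_sub_one_le {R : Type*} [Field R] [LinearOrder R]
    [IsStrictOrderedRing R] {k β ρ : ℕ} (h : β + ρ ≤ k) :
    (β * (β - 1) + ρ * (ρ - 1) : R) ≤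
      (if β = 0 ∨ ρ = 0 then (k * (k - 1) : R) else 0) + (k - 2) * (β * ρ) := by
  have h' : (β + ρ : R) ≤ k := by exact_mod_cast h
  split_ifs with h0
  · rcases h0 with rfl | rfl
    · simpa using Nat.cast_mul_sub_one_le (by omega : ρ ≤ k)
    · simpa using Nat.cast_mul_sub_one_le (by omega : β ≤ k)
  · push Not at h0
    have hβ : (1 : R) ≤ β := by exact_mod_cast Nat.one_le_iff_ne_zero.2 h0.1
    have hρ : (1 : R) ≤ ρ := by exact_mod_cast Nat.one_le_iff_ne_zero.2 h0.2
    nlinarith [mul_nonneg (mul_nonneg (sub_nonneg.2 hβ) (sub_nonneg.2 hρ))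
        (by positivity : (0 : R) ≤ β + ρ),
      mul_nonneg (sub_nonneg.2 h') (by positivity : (0 : R) ≤ β * ρ)]

lemma isLine_affineSpan_pair {p q : ℝ × ℝ} (hpq : p ≠ q) : IsLine (line[ℝ, p, q] : Set (ℝ × ℝ)) :=
  ⟨_, by rw [direction_affineSpan, vectorSpan_pair, finrank_span_singleton (vsub_ne_zero.2 hpq)],
    rfl⟩

lemma IsLine.affineSpan_pair_eq {L : Set (ℝ × ℝ)} (hL : IsLine L) {p q : ℝ × ℝ} (hpq : p ≠ q)
    (hp : p ∈ L) (hq : q ∈ L) : (line[ℝ, p, q] : Set (ℝ × ℝ)) = L := by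
  obtain ⟨ℓ, hℓ, rfl⟩ := hL
  rw [AffineSubspace.affineSpan_pair_eq_of_finrank_direction_eq_one hℓ hpq hp hq]

lemma IsLine.affineSpan_pair_eq_iff {L : Set (ℝ × ℝ)} (hL : IsLine L) {p q : ℝ × ℝ}
    (hpq : p ≠ q) : (line[ℝ, p, q] : Set (ℝ × ℝ)) = L ↔ p ∈ L ∧ q ∈ L := by
  refine ⟨?_, fun h ↦ hL.affineSpan_pair_eq hpq h.1 h.2⟩
  rintro rfl
  exact ⟨left_mem_affineSpan_pair ℝ p q, right_mem_affineSpan_pair ℝ p q⟩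

noncomputable def spannedLines (F : Finset (ℝ × ℝ)) : Finset (Set (ℝ × ℝ)) :=
  F.offDiag.image fun x ↦ (line[ℝ, x.1, x.2] : Set (ℝ × ℝ))

section spannedLines

variable {F : Finset (ℝ × ℝ)}

lemma mem_spannedLines {L : Set (ℝ × ℝ)} :
    L ∈ spannedLines F ↔ IsLine L ∧ 1 < #{p ∈ F | p ∈ L} := by
  simp only [spannedLines, mem_image, mem_offDiag, one_lt_card, mem_filter]
  constructor
  · rintro ⟨⟨p, q⟩, ⟨hp, hq, hpq⟩, rfl⟩
    exact ⟨isLine_affineSpan_pair hpq, p, ⟨hp, left_mem_affineSpan_pair ℝ p q⟩, q,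
      ⟨hq, right_mem_affineSpan_pair ℝ p q⟩, hpq⟩
  · rintro ⟨hL, p, ⟨hp, hpL⟩, q, ⟨hq, hqL⟩, hpq⟩
    exact ⟨(p, q), ⟨hp, hq, hpq⟩, hL.affineSpan_pair_eq hpq hpL hqL⟩

lemma card_eq_sum_spannedLines {P : Finset ((ℝ × ℝ) × (ℝ × ℝ))} (hP : P ⊆ F.offDiag) :
    #P = ∑ L ∈ spannedLines F, #{x ∈ P | x.1 ∈ L ∧ x.2 ∈ L} := by
  rw [card_eq_sum_card_fiberwise (t := spannedLines F)
    (f := fun x ↦ (line[ℝ, x.1, x.2] : Set (ℝ × ℝ)))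
    fun x hx ↦ mem_image_of_mem _ (hP hx)]
  refine sum_congr rfl fun L hL ↦ congrArg card (filter_congr fun x hx ↦ ?_)
  exact (mem_spannedLines.1 hL).1.affineSpan_pair_eq_iff (mem_offDiag.1 (hP hx)).2.2

lemma card_offDiag_eq_sum_spannedLines {s : Finset (ℝ × ℝ)} (hs : s ⊆ F) :
    #s.offDiag = ∑ L ∈ spannedLines F, #{p ∈ s | p ∈ L}.offDiag := by
  simp only [card_eq_sum_spannedLines (offDiag_mono hs), filter_offDiag]

lemma card_product_eq_sum_spannedLines {s t : Finset (ℝ × ℝ)} (hs : s ⊆ F) (ht : t ⊆ F)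
    (hst : Disjoint s t) :
    #s * #t = ∑ L ∈ spannedLines F, #{p ∈ s | p ∈ L} * #{p ∈ t | p ∈ L} := by
  have hsub : s ×ˢ t ⊆ F.offDiag := fun x hx ↦ by
    obtain ⟨h1, h2⟩ := mem_product.1 hx
    exact mem_offDiag.2 ⟨hs h1, ht h2, fun h ↦ disjoint_left.1 hst h1 (h ▸ h2)⟩
  rw [← card_product, card_eq_sum_spannedLines hsub]
  simp only [filter_product, card_product]

end spannedLines

section coloring

variable (F : Finset (ℝ × ℝ)) (c : ℝ × ℝ → Bool)

lemma ncard_coe_inter (L : Set (ℝ × ℝ)) : ((F : Set (ℝ × ℝ)) ∩ L).ncard = #{p ∈ F | p ∈ L} :=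
  ncard_setOf_mem_and F (· ∈ L)

lemma card_filter_true_add_card_filter_false (L : Set (ℝ × ℝ)) :
    #{p ∈ {p ∈ F | c p = true} | p ∈ L} + #{p ∈ {p ∈ F | c p = false} | p ∈ L} =
      #{p ∈ F | p ∈ L} := by
  simp only [filter_comm _ (· ∈ L), ← Bool.not_eq_true]
  exact card_filter_add_card_filter_not _

variable {F c} in
lemma mem_monoLines_iff {L : Set (ℝ × ℝ)} (hL : L ∈ spannedLines F) :
    L ∈ monoLines F c ↔
      #{p ∈ {p ∈ F | c p = true} | p ∈ L} = 0 ∨ #{p ∈ {p ∈ F | c p = false} | p ∈ L} = 0 := by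
  obtain ⟨hline, htwo⟩ := mem_spannedLines.1 hL
  simp only [monoLines, Set.mem_ofPred_eq, ncard_coe_inter, card_eq_zero, filter_eq_empty_iff,
    mem_filter, Set.mem_inter_iff, mem_coe]
  grind

lemma ncard_monoLines : (monoLines F c).ncard = #{L ∈ spannedLines F | L ∈ monoLines F c} := by
  rw [← Set.ncard_coe_finset, coe_filter]
  congr 1
  ext L
  refine ⟨fun hL ↦ ⟨mem_spannedLines.2 ⟨hL.1, ?_⟩, hL⟩, And.right⟩
  rw [← ncard_coe_inter]
  exact hL.2.1

theorem card_offDiag_add_card_offDiag_le (k : ℕ)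
    (hF : ∀ L, IsLine L → #{p ∈ F | p ∈ L} ≤ k) :
    (#{p ∈ F | c p = true}.offDiag + #{p ∈ F | c p = false}.offDiag : ℝ) ≤
      k * (k - 1) * (monoLines F c).ncard +
        (k - 2) * (#{p ∈ F | c p = true} * #{p ∈ F | c p = false} : ℕ) := by
  have hBR : Disjoint {p ∈ F | c p = true} {p ∈ F | c p = false} :=
    disjoint_filter.2 fun p _ h ↦ by simp [h]
  rw [card_offDiag_eq_sum_spannedLines (filter_subset _ F),
    card_offDiag_eq_sum_spannedLines (filter_subset _ F),
    card_product_eq_sum_spannedLines (filter_subset _ _) (filter_subset _ _) hBR,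
    ncard_monoLines, card_filter]
  push_cast [cast_card_offDiag, Finset.mul_sum, ← sum_add_distrib]
  refine sum_le_sum fun L hL ↦ ?_
  have hline := mul_sub_one_add_mul_sub_one_le (R := ℝ)
    ((card_filter_true_add_card_filter_false F c L).trans_le (hF L (mem_spannedLines.1 hL).1))
  simpa only [mul_ite, mul_one, mul_zero, mem_monoLines_iff hL] using hline

end coloring

theorem mono_lines_at_most_k_per_line_general (k : ℕ) (n : ℕ)
    (S : Set (ℝ × ℝ)) (hfin : S.Finite) (hcard : S.ncard = n)
    (c : (ℝ × ℝ) → Bool)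
    (h_k : ∀ L : Set (ℝ × ℝ), IsLine L → (S ∩ L).ncard ≤ k)
    (b r : ℕ)
    (hb : b = {p ∈ S | c p = true}.ncard)
    (hr : r = {p ∈ S | c p = false}.ncard) :
    ((monoLines S c).ncard : ℝ) ≥
      ((b : ℝ) ^ 2 - ((k : ℝ) - 2) * b * r + (r : ℝ) ^ 2 - n) / (k * (k - 1)) := by
  lift S to Finset (ℝ × ℝ) using hfin
  rw [ncard_setOf_mem_and] at hb hr
  rw [Set.ncard_coe_finset] at hcard
  have hn : (n : ℝ) = b + r := by
    rw [← hcard, hb, hr, ← card_filter_add_card_filter_not (fun p ↦ c p = true)]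
    push_cast [Bool.not_eq_true]
    rfl
  have key := card_offDiag_add_card_offDiag_le S c k fun L hL ↦ ncard_coe_inter S L ▸ h_k L hL
  rw [cast_card_offDiag, cast_card_offDiag, ← hb, ← hr] at key
  have hk₀ : (0 : ℝ) ≤ k * (k - 1) := by
    simpa using Nat.cast_mul_sub_one_le (R := ℝ) (Nat.zero_le k)
  refine div_le_of_le_mul₀ hk₀ (Nat.cast_nonneg _) ?_
  push_cast at key
  linarith

/-- In a two-colored set of `n` points in the plane with at most `k` points on any
line (`k ≥ 2`), with `b` blue points and `r` red points, the number of monochromatic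
lines is at least `(b² − (k−2)·b·r + r² − n) / (k(k−1))`. -/
theorem mono_lines_at_most_k_per_line (k : ℕ) (hk : 2 ≤ k) (n : ℕ)
    (S : Set (ℝ × ℝ)) (hfin : S.Finite) (hcard : S.ncard = n)
    (c : (ℝ × ℝ) → Bool)
    (h_k : ∀ L : Set (ℝ × ℝ), IsLine L → (S ∩ L).ncard ≤ k)
    (b r : ℕ)
    (hb : b = {p ∈ S | c p = true}.ncard)
    (hr : r = {p ∈ S | c p = false}.ncard) :
    ((monoLines S c).ncard : ℝ) ≥
      ((b : ℝ) ^ 2 - ((k : ℝ) - 2) * b * r + (r : ℝ) ^ 2 - n) / (k * (k - 1)) :=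
  mono_lines_at_most_k_per_line_general k n S hfin hcard c h_k b r hb hr
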